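/- arXiv:1904.00616 — 7 statements merged into one kernel-verified Lean document; each statement's English description precedes it below -/
import Mathlib

section
/- Let n, m be positive integers, let V_o : ℝⁿ → ℝ be a nonnegative continuously differentiable function, let f_o : ℝⁿ × ℝᵐ → ℝⁿ, and let α_o, γ_o be class K∞ functions such that ⟨∇V_o(e), f_o(e,d)⟩ ≤ −α_o(V_o(e)) + γ_o(‖d‖) for all e ∈ ℝⁿ, d ∈ ℝᵐ. Let ν : [0,∞) → [0,∞) be continuous and nondecreasing and define ℓ(s) = ∫₀ˢ ν(r) dr. Then for all e ∈ ℝⁿ and d ∈ ℝᵐ, ⟨∇(ℓ ∘ V_o)(e), f_o(e,d)⟩ ≤ −(1/2)·ν(V_o(e))·α_o(V_o(e)) + ν(θ(‖d‖))·γ_o(‖d‖), where θ(s) := α_o⁻¹(2γ_o(s)) and α_o⁻¹ denotes the inverse of the bijection α_o of [0,∞). -/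
/-!
Since `ℓ' = ν`, the chain rule gives `⟨∇(ℓ ∘ V_o), f_o⟩ = ν(V_o) ⟨∇V_o, f_o⟩ ≤ ν(V_o) (γ_o - α_o(V_o))`.
If `α_o(V_o) ≥ 2 γ_o`, this is already at most `-ν(V_o) α_o(V_o) / 2`. Otherwise
`α_o(V_o) < 2 γ_o = α_o(θ)`, so `V_o < θ`, and monotonicity of `ν` bounds
`ν(V_o) (γ_o - α_o(V_o)/2)` by `ν(θ) γ_o`.
-/

open scoped RealInnerProductSpace

/-- A class `K` function: continuous, strictly increasing on `[0,∞)`, vanishing at `0`. -/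
def IsClassK (f : ℝ → ℝ) : Prop :=
  ContinuousOn f (Set.Ici 0) ∧ StrictMonoOn f (Set.Ici 0) ∧ f 0 = 0

/-- A class `K∞` function: a class `K` function that is unbounded. -/
def IsClassKInf (f : ℝ → ℝ) : Prop :=
  IsClassK f ∧ ∀ M : ℝ, ∃ s, 0 ≤ s ∧ M < f s

open Set

theorem IsClassK.nonneg {α : ℝ → ℝ} (hα : IsClassK α) {s : ℝ} (hs : 0 ≤ s) : 0 ≤ α s := by
  simpa [hα.2.2] using hα.2.1.monotoneOn self_mem_Ici (mem_Ici.2 hs) hs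

theorem IsClassK.rescaled_dissipation_le {α ν : ℝ → ℝ} (hα : IsClassK α)
    (hν_mono : MonotoneOn ν (Ici 0)) (hν_nonneg : ∀ s, 0 ≤ s → 0 ≤ ν s)
    {v g t : ℝ} (hv : 0 ≤ v) (ht : 0 ≤ t) (hαt : α t = 2 * g) :
    ν v * (-α v + g) ≤ -(1 / 2) * (ν v * α v) + ν t * g := by
  have hαv : 0 ≤ α v := hα.nonneg hv
  have hg : 0 ≤ g := by linarith [hα.nonneg ht]
  have hνv : 0 ≤ ν v := hν_nonneg v hv
  have hνt : 0 ≤ ν t := hν_nonneg t ht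
  rcases le_or_gt (2 * g) (α v) with hsmall | hlarge
  · nlinarith [mul_nonneg hνv (sub_nonneg.2 hsmall), mul_nonneg hνt hg]
  · have hvt : v < t := (hα.2.1.lt_iff_lt hv ht).1 (hαt ▸ hlarge)
    have hνvt : ν v ≤ ν t := hν_mono hv ht hvt.le
    nlinarith [mul_nonneg (sub_nonneg.2 hνvt) (sub_nonneg.2 hlarge.le), mul_nonneg hνt hαv]

/-- `ν` is only continuous on `[0, ∞)`; along a nonnegative `V` we may replace it by the
continuous function `r ↦ ν (max r 0)` and apply the fundamental theorem of calculus. -/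
theorem hasFDerivAt_intervalIntegral_comp {E : Type*} [NormedAddCommGroup E] [NormedSpace ℝ E]
    {ν : ℝ → ℝ} (hν : ContinuousOn ν (Ici 0)) {V : E → ℝ} (hV_nonneg : ∀ x, 0 ≤ V x)
    {V' : E →L[ℝ] ℝ} {e : E} (hV : HasFDerivAt V V' e) :
    HasFDerivAt (fun x => ∫ r in (0 : ℝ)..V x, ν r) (ν (V e) • V') e := by
  set ν_ext : ℝ → ℝ := fun r => ν (max r 0)
  have hν_ext : Continuous ν_ext :=
    hν.comp_continuous (continuous_id.max continuous_const) fun r => le_max_right r 0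
  have hν_ext_eq : ∀ r, 0 ≤ r → ν_ext r = ν r := fun r hr => by simp only [ν_ext, max_eq_left hr]
  have hcomp : (fun x => ∫ r in (0 : ℝ)..V x, ν r) = fun x => ∫ r in (0 : ℝ)..V x, ν_ext r := by
    funext x
    refine intervalIntegral.integral_congr fun r hr => (hν_ext_eq r ?_).symm
    rw [uIcc_of_le (hV_nonneg x)] at hr
    exact hr.1
  rw [hcomp, ← hν_ext_eq _ (hV_nonneg e)]
  exact ((hν_ext.integral_hasStrictDerivAt 0 (V e)).hasDerivAt).comp_hasFDerivAt e hV

theorem gradient_intervalIntegral_comp {F : Type*} [NormedAddCommGroup F]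
    [InnerProductSpace ℝ F] [CompleteSpace F] {ν : ℝ → ℝ} (hν : ContinuousOn ν (Ici 0))
    {V : F → ℝ} (hV_nonneg : ∀ x, 0 ≤ V x) {e : F} (hV : DifferentiableAt ℝ V e) :
    gradient (fun x => ∫ r in (0 : ℝ)..V x, ν r) e = ν (V e) • gradient V e := by
  rw [gradient, (hasFDerivAt_intervalIntegral_comp hν hV_nonneg hV.hasFDerivAt).fderiv,
    map_smul, gradient]

theorem stmt_1_general (n m : ℕ)
    (V_o : EuclideanSpace ℝ (Fin n) → ℝ)
    (hVo_nonneg : ∀ e, 0 ≤ V_o e) (hVo_smooth : ContDiff ℝ 1 V_o)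
    (f_o : EuclideanSpace ℝ (Fin n) → EuclideanSpace ℝ (Fin m) → EuclideanSpace ℝ (Fin n))
    (α_o γ_o : ℝ → ℝ) (hα : IsClassKInf α_o)
    (hdiss : ∀ e d, ⟪gradient V_o e, f_o e d⟫ ≤ -α_o (V_o e) + γ_o ‖d‖)
    (ν : ℝ → ℝ) (hν_cont : ContinuousOn ν (Set.Ici 0))
    (hν_mono : MonotoneOn ν (Set.Ici 0)) (hν_nonneg : ∀ s, 0 ≤ s → 0 ≤ ν s)
    -- `θ = α_o⁻¹ ∘ (2 • γ_o)`, i.e. the (unique) nonnegative function with `α_o (θ s) = 2 γ_o s`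
    (θ : ℝ → ℝ) (hθ : ∀ s, 0 ≤ s → 0 ≤ θ s ∧ α_o (θ s) = 2 * γ_o s) :
    ∀ e d, ⟪gradient (fun e' => ∫ r in (0:ℝ)..(V_o e'), ν r) e, f_o e d⟫ ≤
      -(1 / 2) * (ν (V_o e) * α_o (V_o e)) + ν (θ ‖d‖) * γ_o ‖d‖ := by
  intro e d
  obtain ⟨hθ_nonneg, hαθ⟩ := hθ ‖d‖ (norm_nonneg d)
  rw [gradient_intervalIntegral_comp hν_cont hVo_nonneg
    (hVo_smooth.differentiable one_ne_zero e), real_inner_smul_left]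
  calc ν (V_o e) * ⟪gradient V_o e, f_o e d⟫
      ≤ ν (V_o e) * (-α_o (V_o e) + γ_o ‖d‖) :=
        mul_le_mul_of_nonneg_left (hdiss e d) (hν_nonneg _ (hVo_nonneg e))
    _ ≤ -(1 / 2) * (ν (V_o e) * α_o (V_o e)) + ν (θ ‖d‖) * γ_o ‖d‖ :=
        hα.1.rescaled_dissipation_le hν_mono hν_nonneg (hVo_nonneg e) hθ_nonneg hαθ

theorem stmt_1 (n m : ℕ) (hn : 0 < n) (hm : 0 < m)
    (V_o : EuclideanSpace ℝ (Fin n) → ℝ)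
    (hVo_nonneg : ∀ e, 0 ≤ V_o e) (hVo_smooth : ContDiff ℝ 1 V_o)
    (f_o : EuclideanSpace ℝ (Fin n) → EuclideanSpace ℝ (Fin m) → EuclideanSpace ℝ (Fin n))
    (α_o γ_o : ℝ → ℝ) (hα : IsClassKInf α_o) (hγ : IsClassKInf γ_o)
    (hdiss : ∀ e d, ⟪gradient V_o e, f_o e d⟫ ≤ -α_o (V_o e) + γ_o ‖d‖)
    (ν : ℝ → ℝ) (hν_cont : ContinuousOn ν (Set.Ici 0))
    (hν_mono : MonotoneOn ν (Set.Ici 0)) (hν_nonneg : ∀ s, 0 ≤ s → 0 ≤ ν s)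
    -- `θ = α_o⁻¹ ∘ (2 • γ_o)`, i.e. the (unique) nonnegative function with `α_o (θ s) = 2 γ_o s`
    (θ : ℝ → ℝ) (hθ : ∀ s, 0 ≤ s → 0 ≤ θ s ∧ α_o (θ s) = 2 * γ_o s) :
    ∀ e d, ⟪gradient (fun e' => ∫ r in (0:ℝ)..(V_o e'), ν r) e, f_o e d⟫ ≤
      -(1 / 2) * (ν (V_o e) * α_o (V_o e)) + ν (θ ‖d‖) * γ_o ‖d‖ :=
  stmt_1_general n m V_o hVo_nonneg hVo_smooth f_o α_o γ_o hα hdiss ν hν_cont hν_mono hν_nonneg θ hθ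
end

section
/- Let n_c, n_o, n_d be positive integers. Let V_o : ℝ^{n_o} → ℝ and V_c : ℝ^{n_c} → ℝ be nonnegative continuously differentiable functions, f_o : ℝ^{n_o} × ℝ^{n_d} → ℝ^{n_o}, f_c : ℝ^{n_c} × ℝ^{n_o} → ℝ^{n_c}, and let α_o, γ_o, α_c, γ_c be class K∞ functions such that for all x, e, d: ⟨∇V_o(e), f_o(e,d)⟩ ≤ −α_o(V_o(e)) + γ_o(‖d‖) and ⟨∇V_c(x), f_c(x,e)⟩ ≤ −α_c(V_c(x)) + γ_c(V_o(e)). Let ν : [0,∞) → [0,∞) be continuous and nondecreasing with ν(s) ≥ 4·γ_c(s)/α_o(s) for all s > 0, and define V(x,e) := ∫₀^{V_o(e)} ν(r) dr + V_c(x). Then there exist class K∞ functions α and γ such that for all (x,e,d) ∈ ℝ^{n_c} × ℝ^{n_o} × ℝ^{n_d}: ⟨∇V(x,e), (f_c(x,e), f_o(e,d))⟩ ≤ −α(V(x,e)) + γ(‖d‖). -/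
open scoped RealInnerProductSpace

/-!
With `F t = ∫₀ᵗ ν`, the chain rule gives `V̇ = ⟪∇V_c, f_c⟫ + ν (V_o) ⟪∇V_o, f_o⟫`, hence
`V̇ ≤ -α_c (V_c) + γ_c (V_o) - ν (V_o) α_o (V_o) + ν (V_o) γ_o (‖d‖)`.
The choice of `ν` makes `γ_c (V_o)` at most a quarter of `ν (V_o) α_o (V_o)`, and the cross term
`ν (V_o) γ_o (‖d‖)` is at most half of it plus the `K∞` function `σ (γ_o ‖d‖)` of `‖d‖`, where
`σ t = (ν (α_o⁻¹ (2 t)) + 1) t`. What is left, `-α_c (V_c) - ν (V_o) α_o (V_o) / 4`, is at most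
`-α (F (V_o) + V_c) = -α (V)` because `F` is itself of class `K∞`.
-/

open Set Filter MeasureTheory intervalIntegral

namespace IsClassK

variable {f : ℝ → ℝ}

lemma nonneg_s3 (hf : IsClassK f) {s : ℝ} (hs : 0 ≤ s) : 0 ≤ f s :=
  hf.2.2 ▸ hf.2.1.monotoneOn self_mem_Ici hs hs

lemma pos (hf : IsClassK f) {s : ℝ} (hs : 0 < s) : 0 < f s :=
  hf.2.2 ▸ hf.2.1 self_mem_Ici hs.le hs

lemma monotoneOn (hf : IsClassK f) : MonotoneOn f (Ici 0) :=
  hf.2.1.monotoneOn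

lemma mapsTo (hf : IsClassK f) : MapsTo f (Ici 0) (Ici 0) :=
  fun _ hs => hf.nonneg_s3 hs

end IsClassK

lemma isClassKInf_id : IsClassKInf id :=
  ⟨⟨continuousOn_id, strictMono_id.strictMonoOn _, rfl⟩, fun M => ⟨max M 0 + 1, by positivity,
    by simp only [id]; linarith [le_max_left M 0]⟩⟩

lemma isClassKInf_div_two : IsClassKInf (fun t : ℝ => t / 2) :=
  ⟨⟨(continuous_id.div_const 2).continuousOn, fun _ _ _ _ hab => by simp only; linarith,
      zero_div 2⟩,
    fun M => ⟨2 * max M 0 + 2, by positivity, by linarith [le_max_left M 0]⟩⟩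

namespace IsClassKInf

variable {f g : ℝ → ℝ}

lemma comp (hf : IsClassKInf f) (hg : IsClassKInf g) : IsClassKInf (f ∘ g) := by
  refine ⟨⟨hf.1.1.comp hg.1.1 hg.1.mapsTo, hf.1.2.1.comp hg.1.2.1 hg.1.mapsTo, ?_⟩, fun M => ?_⟩
  · simp [hg.1.2.2, hf.1.2.2]
  obtain ⟨s, hs, hMs⟩ := hf.2 M
  obtain ⟨t, ht, hst⟩ := hg.2 s
  exact ⟨t, ht, hMs.trans_le (hf.1.monotoneOn hs (hg.1.nonneg_s3 ht) hst.le)⟩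

lemma inf (hf : IsClassKInf f) (hg : IsClassKInf g) : IsClassKInf (fun t => min (f t) (g t)) := by
  refine ⟨⟨hf.1.1.inf hg.1.1, fun a ha b hb hab => ?_, by simp [hf.1.2.2, hg.1.2.2]⟩, fun M => ?_⟩
  · exact min_lt_min (hf.1.2.1 ha hb hab) (hg.1.2.1 ha hb hab)
  obtain ⟨s, hs, hMs⟩ := hf.2 M
  obtain ⟨t, ht, hMt⟩ := hg.2 M
  have hmax : (0 : ℝ) ≤ max s t := hs.trans (le_max_left s t)
  exact ⟨max s t, hmax, lt_min (hMs.trans_le (hf.1.monotoneOn hs hmax (le_max_left s t)))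
    (hMt.trans_le (hg.1.monotoneOn ht hmax (le_max_right s t)))⟩

lemma mul_of_monotoneOn (hf : IsClassKInf f) {h : ℝ → ℝ} (hc : ContinuousOn h (Ici 0))
    (hm : MonotoneOn h (Ici 0)) (hpos : ∀ s, 0 < s → 0 < h s) :
    IsClassKInf (fun s => h s * f s) := by
  refine ⟨⟨hc.mul hf.1.1, fun a ha b hb hab => ?_, by simp [hf.1.2.2]⟩, fun M => ?_⟩
  · have hb0 : 0 < b := lt_of_le_of_lt ha hab
    calc h a * f a ≤ h b * f a := mul_le_mul_of_nonneg_right (hm ha hb hab.le) (hf.1.nonneg_s3 ha)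
      _ < h b * f b := mul_lt_mul_of_pos_left (hf.1.2.1 ha hb hab) (hpos b hb0)
  have h1 := hpos 1 one_pos
  obtain ⟨s, hs, hMs⟩ := hf.2 (M / h 1)
  have hs1 : (0 : ℝ) ≤ max s 1 := hs.trans (le_max_left s 1)
  refine ⟨max s 1, hs1, ?_⟩
  have hfs : f s ≤ f (max s 1) := hf.1.monotoneOn hs hs1 (le_max_left s 1)
  have hh : h 1 ≤ h (max s 1) := hm (mem_Ici.2 zero_le_one) hs1 (le_max_right s 1)
  rw [div_lt_iff₀' h1] at hMs
  nlinarith [hf.1.nonneg_s3 hs]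

def extend (f : ℝ → ℝ) (t : ℝ) : ℝ := f (max t 0) + min t 0

lemma extend_of_nonneg {t : ℝ} (ht : 0 ≤ t) : extend f t = f t := by
  simp [extend, ht]

lemma extend_of_nonpos (hf : IsClassKInf f) {t : ℝ} (ht : t ≤ 0) : extend f t = t := by
  simp [extend, ht, hf.1.2.2]

lemma continuous_extend (hf : IsClassKInf f) : Continuous (extend f) :=
  (hf.1.1.comp_continuous (continuous_id.max continuous_const) fun t => le_max_right t 0).add
    (continuous_id.min continuous_const)

lemma strictMono_extend (hf : IsClassKInf f) : StrictMono (extend f) := by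
  intro a b hab
  rcases le_or_gt b 0 with hb | hb
  · rw [hf.extend_of_nonpos (hab.le.trans hb), hf.extend_of_nonpos hb]; exact hab
  rw [extend_of_nonneg hb.le]
  rcases le_or_gt a 0 with ha | ha
  · rw [hf.extend_of_nonpos ha]; exact ha.trans_lt (hf.1.pos hb)
  · rw [extend_of_nonneg ha.le]; exact hf.1.2.1 ha.le hb.le hab

lemma surjective_extend (hf : IsClassKInf f) : Function.Surjective (extend f) := by
  refine hf.continuous_extend.surjective ?_ ?_
  · refine tendsto_atTop_atTop_of_monotone hf.strictMono_extend.monotone fun M => ?_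
    obtain ⟨s, hs, hMs⟩ := hf.2 M
    exact ⟨s, (extend_of_nonneg hs).symm ▸ hMs.le⟩
  · refine tendsto_id.congr' ?_
    filter_upwards [eventually_le_atBot 0] with t ht using (hf.extend_of_nonpos ht).symm

lemma exists_inverse (hf : IsClassKInf f) :
    ∃ g, IsClassKInf g ∧ (∀ t, 0 ≤ t → f (g t) = t) ∧ ∀ s, 0 ≤ s → g (f s) = s := by
  let e := hf.strictMono_extend.orderIsoOfSurjective _ hf.surjective_extend
  have hg0 : e.symm 0 = 0 := by
    rw [e.symm_apply_eq, eq_comm]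
    exact (extend_of_nonneg le_rfl).trans hf.1.2.2
  have hg_nonneg {t : ℝ} (ht : 0 ≤ t) : 0 ≤ e.symm t := hg0 ▸ e.symm.monotone ht
  have hgf {s : ℝ} (hs : 0 ≤ s) : e.symm (f s) = s := by
    rw [e.symm_apply_eq]; exact (extend_of_nonneg hs).symm
  refine ⟨e.symm, ⟨⟨e.symm.continuous.continuousOn, e.symm.strictMono.strictMonoOn _, hg0⟩,
    fun M => ?_⟩, fun t ht => ?_, fun s hs => hgf hs⟩
  · have hM : 0 ≤ max M 0 + 1 := by positivity
    exact ⟨f (max M 0 + 1), hf.1.nonneg_s3 hM, by rw [hgf hM]; linarith [le_max_left M 0]⟩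
  · rw [← extend_of_nonneg (f := f) (hg_nonneg ht)]
    exact e.apply_symm_apply t

end IsClassKInf

-- Split on which of the two summands is at least half of the sum.
lemma IsClassKInf.exists_le_add {F g β : ℝ → ℝ} (hF : IsClassKInf F) (hg : IsClassKInf g)
    (hβ : IsClassKInf β) :
    ∃ α, IsClassKInf α ∧ ∀ a b, 0 ≤ a → 0 ≤ b → α (F a + b) ≤ g a + β b := by
  obtain ⟨Finv, hFinv, -, hFinv_F⟩ := hF.exists_inverse
  refine ⟨fun t => min ((g ∘ Finv) (t / 2)) (β (t / 2)),
    ((hg.comp hFinv).comp isClassKInf_div_two).inf (hβ.comp isClassKInf_div_two),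
    fun a b ha hb => ?_⟩
  have hFa := hF.1.nonneg_s3 ha
  have hhalf : 0 ≤ (F a + b) / 2 := by positivity
  rcases le_total ((F a + b) / 2) (F a) with h | h
  · calc min ((g ∘ Finv) ((F a + b) / 2)) (β ((F a + b) / 2))
          ≤ g (Finv (F a)) := (min_le_left _ _).trans
            ((hg.comp hFinv).1.monotoneOn hhalf hFa h)
      _ ≤ g a + β b := by rw [hFinv_F a ha]; linarith [hβ.1.nonneg_s3 hb]
  · calc min ((g ∘ Finv) ((F a + b) / 2)) (β ((F a + b) / 2))
          ≤ β b := (min_le_right _ _).trans (hβ.1.monotoneOn hhalf hb (by linarith))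
      _ ≤ g a + β b := by linarith [hg.1.nonneg_s3 ha]

-- Either `t ≤ α s`, or `s ≤ α⁻¹ t` and then `ν s ≤ ν (α⁻¹ t)`.
lemma IsClassKInf.exists_mul_le_mul_add {α ν : ℝ → ℝ} (hα : IsClassKInf α)
    (hν_cont : ContinuousOn ν (Ici 0)) (hν_mono : MonotoneOn ν (Ici 0))
    (hν_nonneg : ∀ s, 0 ≤ s → 0 ≤ ν s) :
    ∃ σ, IsClassKInf σ ∧ ∀ s t, 0 ≤ s → 0 ≤ t → ν s * t ≤ ν s * α s + σ t := by
  obtain ⟨αinv, hαinv, hα_αinv, -⟩ := hα.exists_inverse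
  have hναinv_mono : MonotoneOn (ν ∘ αinv) (Ici 0) :=
    hν_mono.comp hαinv.1.monotoneOn hαinv.1.mapsTo
  refine ⟨fun t => (ν (αinv t) + 1) * t,
    isClassKInf_id.mul_of_monotoneOn
      ((hν_cont.comp hαinv.1.1 hαinv.1.mapsTo).add continuousOn_const)
      (fun a ha b hb hab => add_le_add_left (hναinv_mono ha hb hab) 1)
      (fun t ht => by linarith [hν_nonneg _ (hαinv.1.nonneg_s3 ht.le)]),
    fun s t hs ht => ?_⟩
  have hνs := hν_nonneg s hs
  have hνt := hν_nonneg _ (hαinv.1.nonneg_s3 ht)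
  have hαs := hα.1.nonneg_s3 hs
  rcases le_total (α s) t with hst | hts
  · have hs_le : s ≤ αinv t :=
      (hα.1.2.1.le_iff_le hs (hαinv.1.nonneg_s3 ht)).1 (by rwa [hα_αinv t ht])
    have := hν_mono hs (hαinv.1.nonneg_s3 ht) hs_le
    nlinarith
  · nlinarith

section Primitive

variable {ν : ℝ → ℝ}

-- `ν` is only controlled on `[0, ∞)`; with `ν (max r 0)` in its place the primitive is
-- differentiable everywhere, in particular at the minimum value `0` of a nonnegative `g`.
lemma integral_comp_max_zero {t : ℝ} (ht : 0 ≤ t) :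
    ∫ r in (0 : ℝ)..t, ν (max r 0) = ∫ r in (0 : ℝ)..t, ν r :=
  integral_congr fun r hr => by rw [uIcc_of_le ht] at hr; rw [max_eq_left hr.1]

lemma hasDerivAt_integral_comp_max_zero (hν : ContinuousOn ν (Ici 0)) (t : ℝ) :
    HasDerivAt (fun u => ∫ r in (0 : ℝ)..u, ν (max r 0)) (ν (max t 0)) t :=
  ((hν.comp_continuous (continuous_id.max continuous_const) fun r => le_max_right r 0)
    |>.integral_hasStrictDerivAt 0 t).hasDerivAt

lemma isClassKInf_integral (hν_cont : ContinuousOn ν (Ici 0)) (hν_mono : MonotoneOn ν (Ici 0))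
    (hν_pos : ∀ s, 0 < s → 0 < ν s) : IsClassKInf fun t => ∫ r in (0 : ℝ)..t, ν r := by
  have hint {a b : ℝ} (ha : 0 ≤ a) (hb : 0 ≤ b) : IntervalIntegrable ν volume a b :=
    (hν_cont.mono fun r hr => (le_min ha hb).trans hr.1).intervalIntegrable
  have hincr {a b : ℝ} (ha : 0 ≤ a) (hab : a < b) :
      ∫ r in (0 : ℝ)..b, ν r = (∫ r in (0 : ℝ)..a, ν r) + ∫ r in a..b, ν r :=
    (integral_add_adjacent_intervals (hint le_rfl ha) (hint ha (ha.trans hab.le))).symm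
  have hpos {a b : ℝ} (ha : 0 ≤ a) (hab : a < b) : 0 < ∫ r in a..b, ν r :=
    intervalIntegral_pos_of_pos_on (hint ha (ha.trans hab.le))
      (fun r hr => hν_pos r (ha.trans_lt hr.1)) hab
  refine ⟨⟨?_, fun a ha b hb hab => ?_, integral_same⟩, fun M => ?_⟩
  · have hcont := continuous_iff_continuousAt.2 fun t =>
      (hasDerivAt_integral_comp_max_zero hν_cont t).continuousAt
    exact hcont.continuousOn.congr fun t ht => (integral_comp_max_zero ht).symm
  · dsimp only
    rw [hincr ha hab]
    linarith [hpos ha hab]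
  · have hν1 := hν_pos 1 one_pos
    set s := (max M 0 + 1) / ν 1 + 1
    have hs : 1 < s := by simp only [s]; linarith [div_pos (by positivity : 0 < max M 0 + 1) hν1]
    have hlower : (s - 1) * ν 1 ≤ ∫ r in (1 : ℝ)..s, ν r := by
      rw [← smul_eq_mul, ← intervalIntegral.integral_const]
      exact integral_mono_on hs.le intervalIntegrable_const (hint zero_le_one (by linarith))
        fun r hr => hν_mono (mem_Ici.2 zero_le_one) (mem_Ici.2 (by linarith [hr.1])) hr.1
    have hs_sub : (s - 1) * ν 1 = max M 0 + 1 := by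
      simp only [s]; field_simp; ring
    refine ⟨s, by linarith, ?_⟩
    dsimp only
    rw [hincr zero_le_one hs]
    linarith [hpos le_rfl one_pos, le_max_left M 0]

lemma inner_gradient_integral_comp {E : Type*} [NormedAddCommGroup E] [InnerProductSpace ℝ E]
    [CompleteSpace E] (hν : ContinuousOn ν (Ici 0)) {g : E → ℝ} (hg_nonneg : ∀ y, 0 ≤ g y)
    {x : E} (hg : DifferentiableAt ℝ g x) (v : E) :
    ⟪gradient (fun y => ∫ r in (0 : ℝ)..g y, ν r) x, v⟫ = ν (g x) * ⟪gradient g x, v⟫ := by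
  have hcomp := (hasDerivAt_integral_comp_max_zero hν (g x)).comp_hasFDerivAt x hg.hasFDerivAt
  have heq : (fun y => ∫ r in (0 : ℝ)..g y, ν r) = (fun u => ∫ r in (0 : ℝ)..u, ν (max r 0)) ∘ g :=
    funext fun y => (integral_comp_max_zero (hg_nonneg y)).symm
  rw [inner_gradient_left, inner_gradient_left, heq, hcomp.fderiv, max_eq_left (hg_nonneg x)]
  rfl

end Primitive

theorem stmt_3_general (nc no nd : ℕ)
    (V_o : EuclideanSpace ℝ (Fin no) → ℝ) (V_c : EuclideanSpace ℝ (Fin nc) → ℝ)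
    (hVo_nonneg : ∀ e, 0 ≤ V_o e) (hVc_nonneg : ∀ x, 0 ≤ V_c x)
    (hVo_smooth : ContDiff ℝ 1 V_o)
    (f_o : EuclideanSpace ℝ (Fin no) → EuclideanSpace ℝ (Fin nd) → EuclideanSpace ℝ (Fin no))
    (f_c : EuclideanSpace ℝ (Fin nc) → EuclideanSpace ℝ (Fin no) → EuclideanSpace ℝ (Fin nc))
    (α_o γ_o α_c γ_c : ℝ → ℝ)
    (hα_o : IsClassKInf α_o) (hγ_o : IsClassKInf γ_o)
    (hα_c : IsClassKInf α_c) (hγ_c : IsClassKInf γ_c)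
    (hdiss_o : ∀ e d, ⟪gradient V_o e, f_o e d⟫ ≤ -α_o (V_o e) + γ_o ‖d‖)
    (hdiss_c : ∀ x e, ⟪gradient V_c x, f_c x e⟫ ≤ -α_c (V_c x) + γ_c (V_o e))
    (ν : ℝ → ℝ) (hν_cont : ContinuousOn ν (Set.Ici 0))
    (hν_mono : MonotoneOn ν (Set.Ici 0)) (hν_nonneg : ∀ s, 0 ≤ s → 0 ≤ ν s)
    (hν_ge : ∀ s, 0 < s → 4 * γ_c s / α_o s ≤ ν s)
    -- `V (x, e) = ∫₀^{V_o e} ν + V_c x`; its derivative along the cascade vector field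
    -- `(f_c (x,e), f_o (e,d))` is the sum of the two partial-gradient pairings below.
    (V : EuclideanSpace ℝ (Fin nc) → EuclideanSpace ℝ (Fin no) → ℝ)
    (hV : ∀ x e, V x e = (∫ r in (0:ℝ)..(V_o e), ν r) + V_c x) :
    ∃ α γ : ℝ → ℝ, IsClassKInf α ∧ IsClassKInf γ ∧
      ∀ (x : EuclideanSpace ℝ (Fin nc)) (e : EuclideanSpace ℝ (Fin no))
        (d : EuclideanSpace ℝ (Fin nd)),
        ⟪gradient (fun x' => V x' e) x, f_c x e⟫ + ⟪gradient (fun e' => V x e') e, f_o e d⟫ ≤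
          -α (V x e) + γ ‖d‖ := by
  have hν_pos (s : ℝ) (hs : 0 < s) : 0 < ν s :=
    (div_pos (by linarith [hγ_c.1.pos hs]) (hα_o.1.pos hs)).trans_le (hν_ge s hs)
  have hγ_c_le (s : ℝ) (hs : 0 ≤ s) : γ_c s ≤ ν s * α_o s / 4 := by
    rcases hs.eq_or_lt with rfl | hs
    · simp [hγ_c.1.2.2, hα_o.1.2.2]
    · have := hν_ge s hs
      rw [div_le_iff₀ (hα_o.1.pos hs)] at this
      linarith
  obtain ⟨σ, hσ, hσ_le⟩ :=
    (isClassKInf_div_two.comp hα_o).exists_mul_le_mul_add hν_cont hν_mono hν_nonneg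
  obtain ⟨α, hα, hα_le⟩ := (isClassKInf_integral hν_cont hν_mono hν_pos).exists_le_add
    (hα_o.mul_of_monotoneOn (hν_cont.div_const 4)
      (fun a ha b hb hab => div_le_div_of_nonneg_right (hν_mono ha hb hab) zero_le_four)
      fun s hs => div_pos (hν_pos s hs) four_pos) hα_c
  refine ⟨α, σ ∘ γ_o, hα, hσ.comp hγ_o, fun x e d => ?_⟩
  have hx : ⟪gradient (fun x' => V x' e) x, f_c x e⟫ = ⟪gradient V_c x, f_c x e⟫ := by
    simp_rw [hV, inner_gradient_left, fderiv_const_add]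
  have he : ⟪gradient (fun e' => V x e') e, f_o e d⟫ = ν (V_o e) * ⟪gradient V_o e, f_o e d⟫ := by
    simp_rw [hV, inner_gradient_left, fderiv_add_const, ← inner_gradient_left]
    exact inner_gradient_integral_comp hν_cont hVo_nonneg
      (hVo_smooth.differentiable one_ne_zero e) _
  have hs := hVo_nonneg e
  have hνs := hν_nonneg _ hs
  have hcross := hσ_le _ _ hs (hγ_o.1.nonneg_s3 (norm_nonneg d))
  have hlower := hα_le _ _ hs (hVc_nonneg x)
  have hdiss := mul_le_mul_of_nonneg_left (hdiss_o e d) hνs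
  simp only [Function.comp] at hcross ⊢
  rw [hx, he, hV]
  linarith [hdiss_c x e, hγ_c_le _ hs]

theorem stmt_3 (nc no nd : ℕ) (hnc : 0 < nc) (hno : 0 < no) (hnd : 0 < nd)
    (V_o : EuclideanSpace ℝ (Fin no) → ℝ) (V_c : EuclideanSpace ℝ (Fin nc) → ℝ)
    (hVo_nonneg : ∀ e, 0 ≤ V_o e) (hVc_nonneg : ∀ x, 0 ≤ V_c x)
    (hVo_smooth : ContDiff ℝ 1 V_o) (hVc_smooth : ContDiff ℝ 1 V_c)
    (f_o : EuclideanSpace ℝ (Fin no) → EuclideanSpace ℝ (Fin nd) → EuclideanSpace ℝ (Fin no))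
    (f_c : EuclideanSpace ℝ (Fin nc) → EuclideanSpace ℝ (Fin no) → EuclideanSpace ℝ (Fin nc))
    (α_o γ_o α_c γ_c : ℝ → ℝ)
    (hα_o : IsClassKInf α_o) (hγ_o : IsClassKInf γ_o)
    (hα_c : IsClassKInf α_c) (hγ_c : IsClassKInf γ_c)
    (hdiss_o : ∀ e d, ⟪gradient V_o e, f_o e d⟫ ≤ -α_o (V_o e) + γ_o ‖d‖)
    (hdiss_c : ∀ x e, ⟪gradient V_c x, f_c x e⟫ ≤ -α_c (V_c x) + γ_c (V_o e))
    (ν : ℝ → ℝ) (hν_cont : ContinuousOn ν (Set.Ici 0))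
    (hν_mono : MonotoneOn ν (Set.Ici 0)) (hν_nonneg : ∀ s, 0 ≤ s → 0 ≤ ν s)
    (hν_ge : ∀ s, 0 < s → 4 * γ_c s / α_o s ≤ ν s)
    -- `V (x, e) = ∫₀^{V_o e} ν + V_c x`; its derivative along the cascade vector field
    -- `(f_c (x,e), f_o (e,d))` is the sum of the two partial-gradient pairings below.
    (V : EuclideanSpace ℝ (Fin nc) → EuclideanSpace ℝ (Fin no) → ℝ)
    (hV : ∀ x e, V x e = (∫ r in (0:ℝ)..(V_o e), ν r) + V_c x) :
    ∃ α γ : ℝ → ℝ, IsClassKInf α ∧ IsClassKInf γ ∧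
      ∀ (x : EuclideanSpace ℝ (Fin nc)) (e : EuclideanSpace ℝ (Fin no))
        (d : EuclideanSpace ℝ (Fin nd)),
        ⟪gradient (fun x' => V x' e) x, f_c x e⟫ + ⟪gradient (fun e' => V x e') e, f_o e d⟫ ≤
          -α (V x e) + γ ‖d‖ :=
  stmt_3_general nc no nd V_o V_c hVo_nonneg hVc_nonneg hVo_smooth f_o f_c α_o γ_o α_c γ_c hα_o hγ_o
    hα_c hγ_c hdiss_o hdiss_c ν hν_cont hν_mono hν_nonneg hν_ge V hV
end

section
/- Let c₀ > 0 and let ψ : [0,∞) → [0,∞) be a continuously differentiable class K∞ function with ψ′(0) = 0 and ψ(s) ≤ c₀·s for all s ≥ 0. Define φ : [0,∞) → [0,∞) by φ(0) = 0 and φ(s) = exp(∫₁ˢ 2c₀/ψ(r) dr) for s > 0. Then: (i) φ is a class K∞ function; (ii) φ is differentiable on [0,∞) with φ′(s) = 2c₀·φ(s)/ψ(s) for s > 0 and φ′(0) = 0; and (iii) φ′ is continuous on [0,∞). -/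
set_option maxHeartbeats 1000000 in
theorem stmt_6 (c₀ : ℝ) (hc₀ : 0 < c₀) (ψ ψ' : ℝ → ℝ) (hψ : IsClassKInf ψ)
    (hψ_deriv : ∀ s ∈ Set.Ici (0:ℝ), HasDerivWithinAt ψ (ψ' s) (Set.Ici 0) s)
    (hψ'_cont : ContinuousOn ψ' (Set.Ici 0)) (hψ'0 : ψ' 0 = 0)
    (hψ_le : ∀ s, 0 ≤ s → ψ s ≤ c₀ * s)
    (φ : ℝ → ℝ) (hφ0 : φ 0 = 0)
    (hφ : ∀ s, 0 < s → φ s = Real.exp (∫ r in (1:ℝ)..s, 2 * c₀ / ψ r)) :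
    -- (i) `φ` is a class `K∞` function
    IsClassKInf φ ∧
    -- (ii) `φ` is differentiable on `[0,∞)` with `φ′(s) = 2c₀·φ(s)/ψ(s)` for `s > 0`
    --      and (one-sided) derivative `0` at `s = 0`
    (∀ s, 0 < s → HasDerivAt φ (2 * c₀ * φ s / ψ s) s) ∧
    HasDerivWithinAt φ 0 (Set.Ici 0) 0 ∧
    -- (iii) the derivative `φ′` is continuous on `[0,∞)` (note `2c₀·φ(0)/ψ(0) = 0/0 = 0 = φ′(0)`)
    ContinuousOn (fun s => 2 * c₀ * φ s / ψ s) (Set.Ici 0) := by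
  obtain ⟨⟨hψcont, hψmono, hψ0⟩, -⟩ := hψ
  have hψpos : ∀ s : ℝ, 0 < s → 0 < ψ s := fun s hs => by
    have := hψmono Set.self_mem_Ici (Set.mem_Ici.mpr hs.le) hs
    rwa [hψ0] at this
  set g : ℝ → ℝ := fun r => 2 * c₀ / ψ r with hg
  have hgcont : ContinuousOn g (Set.Ioi 0) :=
    continuousOn_const.div (hψcont.mono (Set.Ioi_subset_Ici le_rfl))
      (fun r hr => (hψpos r hr).ne')
  have hsubIoi : ∀ a b : ℝ, 0 < a → 0 < b → Set.uIcc a b ⊆ Set.Ioi 0 := by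
    intro a b ha hb x hx
    exact lt_of_lt_of_le (lt_min ha hb) hx.1
  have hgint : ∀ a b : ℝ, 0 < a → 0 < b → IntervalIntegrable g MeasureTheory.volume a b := by
    intro a b ha hb
    exact (hgcont.mono (hsubIoi a b ha hb)).intervalIntegrable
  have hgpos : ∀ r : ℝ, 0 < r → 0 < g r := fun r hr => div_pos (by positivity) (hψpos r hr)
  have hgge : ∀ r : ℝ, 0 < r → 2 / r ≤ g r := by
    intro r hr
    have h1 : 2 * c₀ / (c₀ * r) ≤ 2 * c₀ / ψ r :=
      div_le_div_of_nonneg_left (by positivity) (hψpos r hr) (hψ_le r hr.le)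
    calc 2 / r = 2 * c₀ / (c₀ * r) := by
          rw [mul_comm 2 c₀, mul_div_mul_left 2 r hc₀.ne']
      _ ≤ g r := h1
  set F : ℝ → ℝ := fun s => ∫ r in (1:ℝ)..s, g r with hF
  have hFderiv : ∀ s : ℝ, 0 < s → HasDerivAt F (g s) s := by
    intro s hs
    exact intervalIntegral.integral_hasDerivAt_right (hgint 1 s one_pos hs)
      (hgcont.stronglyMeasurableAtFilter isOpen_Ioi s hs)
      (hgcont.continuousAt (isOpen_Ioi.mem_nhds hs))
  have hφF : ∀ s : ℝ, 0 < s → φ s = Real.exp (F s) := hφ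
  have hφpos : ∀ s : ℝ, 0 < s → 0 < φ s := fun s hs => by
    rw [hφF s hs]; exact Real.exp_pos _
  have hφnonneg : ∀ s : ℝ, 0 ≤ s → 0 ≤ φ s := by
    intro s hs
    rcases hs.eq_or_lt with h | h
    · rw [← h, hφ0]
    · exact (hφpos s h).le
  have hφderiv : ∀ s : ℝ, 0 < s → HasDerivAt φ (2 * c₀ * φ s / ψ s) s := by
    intro s hs
    have h1 : HasDerivAt (fun u => Real.exp (F u)) (Real.exp (F s) * g s) s :=
      (hFderiv s hs).exp
    have heq : φ =ᶠ[nhds s] (fun u => Real.exp (F u)) := by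
      filter_upwards [isOpen_Ioi.mem_nhds hs] with u hu
      exact hφF u hu
    have h2 : HasDerivAt φ (Real.exp (F s) * g s) s := h1.congr_of_eventuallyEq heq
    convert h2 using 1
    rw [hφF s hs, hg]
    field_simp
  -- integral comparison bounds
  have hinvcont : ContinuousOn (fun r : ℝ => 2 / r) (Set.Ioi 0) :=
    continuousOn_const.div continuousOn_id (fun r hr => (Set.mem_Ioi.mp hr).ne')
  have hinvint : ∀ a b : ℝ, 0 < a → 0 < b →
      IntervalIntegrable (fun r : ℝ => 2 / r) MeasureTheory.volume a b := by
    intro a b ha hb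
    exact (hinvcont.mono (hsubIoi a b ha hb)).intervalIntegrable
  have hinvval : ∀ a b : ℝ, 0 < a → 0 < b →
      (∫ r in a..b, 2 / r) = 2 * Real.log (b / a) := by
    intro a b ha hb
    have h0 : (0:ℝ) ∉ Set.uIcc a b := by
      intro h
      have := hsubIoi a b ha hb h
      simp at this
    rw [show (fun r : ℝ => 2 / r) = fun r : ℝ => 2 * r⁻¹ by
      funext r; rw [div_eq_mul_inv]]
    rw [intervalIntegral.integral_const_mul, integral_inv h0]
  have hFle : ∀ s : ℝ, 0 < s → s ≤ 1 → F s ≤ 2 * Real.log s := by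
    intro s hs hs1
    have h1 : (∫ r in s..(1:ℝ), 2 / r) ≤ ∫ r in s..(1:ℝ), g r := by
      apply intervalIntegral.integral_mono_on hs1 (hinvint s 1 hs one_pos)
        (hgint s 1 hs one_pos)
      intro x hx
      exact hgge x (lt_of_lt_of_le hs hx.1)
    have h2 : (∫ r in s..(1:ℝ), 2 / r) = -(2 * Real.log s) := by
      rw [hinvval s 1 hs one_pos, one_div, Real.log_inv]; ring
    show (∫ r in (1:ℝ)..s, g r) ≤ 2 * Real.log s
    rw [intervalIntegral.integral_symm]
    linarith
  have hFge : ∀ s : ℝ, 1 ≤ s → 2 * Real.log s ≤ F s := by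
    intro s hs
    have hs0 : (0:ℝ) < s := lt_of_lt_of_le one_pos hs
    have h1 : (∫ r in (1:ℝ)..s, 2 / r) ≤ ∫ r in (1:ℝ)..s, g r := by
      apply intervalIntegral.integral_mono_on hs (hinvint 1 s one_pos hs0)
        (hgint 1 s one_pos hs0)
      intro x hx
      exact hgge x (lt_of_lt_of_le one_pos hx.1)
    have h2 : (∫ r in (1:ℝ)..s, 2 / r) = 2 * Real.log s := by
      rw [hinvval 1 s one_pos hs0, div_one]
    show 2 * Real.log s ≤ ∫ r in (1:ℝ)..s, g r
    linarith
  have hexp2log : ∀ s : ℝ, 0 < s → Real.exp (2 * Real.log s) = s ^ 2 := by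
    intro s hs
    rw [show (2:ℝ) * Real.log s = Real.log s + Real.log s by ring, Real.exp_add,
      Real.exp_log hs, sq]
  have hφsq : ∀ s : ℝ, 0 < s → s ≤ 1 → φ s ≤ s ^ 2 := by
    intro s hs hs1
    rw [hφF s hs, ← hexp2log s hs]
    exact Real.exp_le_exp.mpr (hFle s hs hs1)
  have hφge : ∀ s : ℝ, 1 ≤ s → s ^ 2 ≤ φ s := by
    intro s hs
    have hs0 : (0:ℝ) < s := lt_of_lt_of_le one_pos hs
    rw [hφF s hs0, ← hexp2log s hs0]
    exact Real.exp_le_exp.mpr (hFge s hs)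
  -- continuity of φ at 0 within Ici 0
  have hcontφ0 : ContinuousWithinAt φ (Set.Ici 0) 0 := by
    rw [ContinuousWithinAt, hφ0]
    apply squeeze_zero' (g := fun s : ℝ => s ^ 2)
    · filter_upwards [self_mem_nhdsWithin] with s hs
      exact hφnonneg s hs
    · filter_upwards [self_mem_nhdsWithin,
        nhdsWithin_le_nhds (Iio_mem_nhds one_pos)] with s hs0 hs1
      rcases (Set.mem_Ici.mp hs0).eq_or_lt with h | h
      · rw [← h, hφ0]; positivity
      · exact hφsq s h (le_of_lt hs1)
    · have : Filter.Tendsto (fun s : ℝ => s ^ 2) (nhds 0) (nhds ((0:ℝ) ^ 2)) :=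
        (continuous_pow 2).tendsto 0
      simpa using this.mono_left nhdsWithin_le_nhds
  have hcontφ : ContinuousOn φ (Set.Ici 0) := by
    intro x hx
    rcases (Set.mem_Ici.mp hx).eq_or_lt with h | h
    · rw [← h]; exact hcontφ0
    · exact ((hφderiv x h).continuousAt).continuousWithinAt
  have hmonoφ : StrictMonoOn φ (Set.Ici 0) := by
    intro a ha b hb hab
    rcases (Set.mem_Ici.mp ha).eq_or_lt with h | h
    · rw [← h, hφ0]
      exact hφpos b (h ▸ hab)
    · have hb0 : (0:ℝ) < b := h.trans hab
      rw [hφF a h, hφF b hb0]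
      apply Real.exp_lt_exp.mpr
      have key : F a + ∫ r in a..b, g r = F b :=
        intervalIntegral.integral_add_adjacent_intervals (hgint 1 a one_pos h)
          (hgint a b h hb0)
      have pos : 0 < ∫ r in a..b, g r :=
        intervalIntegral.intervalIntegral_pos_of_pos_on (hgint a b h hb0)
          (fun x hx => hgpos x (h.trans hx.1)) hab
      linarith
  have hunbdd : ∀ M : ℝ, ∃ s, 0 ≤ s ∧ M < φ s := by
    intro M
    set s : ℝ := max 1 (|M| + 1) with hs
    have hs1 : 1 ≤ s := le_max_left _ _
    have hsM : |M| + 1 ≤ s := le_max_right _ _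
    refine ⟨s, le_trans zero_le_one hs1, ?_⟩
    have h1 : s ^ 2 ≤ φ s := hφge s hs1
    have h2 : s ≤ s ^ 2 := by nlinarith
    have h3 : M ≤ |M| := le_abs_self M
    linarith
  -- derivative at 0
  have hIci_diff : Set.Ici (0:ℝ) \ {0} = Set.Ioi 0 := by
    ext x
    simp only [Set.mem_diff, Set.mem_Ici, Set.mem_singleton_iff, Set.mem_Ioi]
    constructor
    · rintro ⟨h1, h2⟩; exact lt_of_le_of_ne h1 (Ne.symm h2)
    · intro h; exact ⟨h.le, h.ne'⟩
  have hderiv0 : HasDerivWithinAt φ 0 (Set.Ici 0) 0 := by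
    rw [hasDerivWithinAt_iff_tendsto_slope, hIci_diff]
    apply squeeze_zero' (g := fun s : ℝ => s)
    · filter_upwards [self_mem_nhdsWithin] with s hs
      have hs0 : (0:ℝ) < s := hs
      rw [slope_def_field, hφ0, sub_zero, sub_zero]
      exact div_nonneg (hφnonneg s hs0.le) hs0.le
    · filter_upwards [self_mem_nhdsWithin,
        nhdsWithin_le_nhds (Iio_mem_nhds one_pos)] with s hs0 hs1
      have hs0' : (0:ℝ) < s := hs0
      rw [slope_def_field, hφ0, sub_zero, sub_zero]
      rw [div_le_iff₀ hs0']
      have := hφsq s hs0' (le_of_lt hs1)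
      nlinarith
    · exact Filter.tendsto_id.mono_left nhdsWithin_le_nhds
  -- the δ with ψ' ≤ c₀ on [0, δ]
  have hδex : ∃ δ : ℝ, 0 < δ ∧ ∀ r, 0 ≤ r → r ≤ δ → ψ' r ≤ c₀ := by
    have h := hψ'_cont 0 Set.self_mem_Ici
    have h2 : ∀ᶠ r in nhdsWithin 0 (Set.Ici 0), ψ' r < c₀ :=
      Filter.Tendsto.eventually_lt_const (by rw [hψ'0]; exact hc₀) h
    rw [Filter.eventually_iff, Metric.mem_nhdsWithin_iff] at h2
    obtain ⟨ε, hε, hball⟩ := h2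
    refine ⟨ε / 2, by positivity, fun r hr0 hrδ => le_of_lt (hball ⟨?_, hr0⟩)⟩
    rw [Metric.mem_ball, Real.dist_eq, sub_zero, abs_of_nonneg hr0]
    linarith
  obtain ⟨δ, hδpos, hψ'le⟩ := hδex
  -- the key bound φ s / ψ s ≤ C * s near 0
  set u : ℝ → ℝ := fun s => F s - Real.log (ψ s) - Real.log s with hu
  have huderiv : ∀ s : ℝ, 0 < s → HasDerivAt u (g s - ψ' s / ψ s - 1 / s) s := by
    intro s hs
    have h1 := hFderiv s hs
    have hψs : HasDerivAt ψ (ψ' s) s :=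
      (hψ_deriv s (Set.mem_Ici.mpr hs.le)).hasDerivAt (Ici_mem_nhds hs)
    have h2 : HasDerivAt (fun t => Real.log (ψ t)) (ψ' s / ψ s) s :=
      hψs.log (hψpos s hs).ne'
    have h3 : HasDerivAt Real.log (1 / s) s := by
      simpa [one_div] using Real.hasDerivAt_log hs.ne'
    exact (h1.sub h2).sub h3
  have huderiv_nonneg : ∀ s : ℝ, 0 < s → s ≤ δ → 0 ≤ g s - ψ' s / ψ s - 1 / s := by
    intro s hs hsδ
    have hψs := hψpos s hs
    have h1 : ψ' s / ψ s ≤ c₀ / ψ s :=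
      (div_le_div_iff_of_pos_right hψs).mpr (hψ'le s hs.le hsδ)
    have h2 : 1 / s ≤ c₀ / ψ s := by
      rw [div_le_div_iff₀ hs hψs, one_mul]
      exact hψ_le s hs.le
    have h4 : g s = c₀ / ψ s + c₀ / ψ s := by rw [hg]; ring
    linarith
  set C : ℝ := φ δ / (ψ δ * δ) with hC
  have hCpos : 0 < C :=
    div_pos (hφpos δ hδpos) (mul_pos (hψpos δ hδpos) hδpos)
  have hkey : ∀ s : ℝ, 0 < s → s ≤ δ → φ s / ψ s ≤ C * s := by
    intro s hs hsδ
    have hmono : MonotoneOn u (Set.Icc s δ) := by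
      apply monotoneOn_of_deriv_nonneg (convex_Icc s δ)
      · intro x hx
        exact ((huderiv x (lt_of_lt_of_le hs hx.1)).continuousAt).continuousWithinAt
      · intro x hx
        rw [interior_Icc] at hx
        exact ((huderiv x (hs.trans hx.1)).differentiableAt).differentiableWithinAt
      · intro x hx
        rw [interior_Icc] at hx
        rw [(huderiv x (hs.trans hx.1)).deriv]
        exact huderiv_nonneg x (hs.trans hx.1) hx.2.le
    have h5 : u s ≤ u δ :=
      hmono (Set.left_mem_Icc.mpr hsδ) (Set.right_mem_Icc.mpr hsδ) hsδ
    have h6 := Real.exp_le_exp.mpr h5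
    have hexp : ∀ t : ℝ, 0 < t → Real.exp (u t) = φ t / (ψ t * t) := by
      intro t ht
      rw [hu]
      simp only
      rw [Real.exp_sub, Real.exp_sub, Real.exp_log (hψpos t ht), Real.exp_log ht,
        ← hφF t ht, div_div]
    rw [hexp s hs, hexp δ hδpos] at h6
    have hψs := hψpos s hs
    calc φ s / ψ s = (φ s / (ψ s * s)) * s := by field_simp
      _ ≤ C * s := mul_le_mul_of_nonneg_right h6 hs.le
  -- continuity of derivative function on [0, ∞)
  have hDnonneg : ∀ s : ℝ, 0 ≤ s → 0 ≤ 2 * c₀ * φ s / ψ s := by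
    intro s hs
    rcases hs.eq_or_lt with h | h
    · rw [← h, hφ0, mul_zero, zero_div]
    · have := hφnonneg s hs
      have := (hψpos s h).le
      positivity
  have hDcont0 : ContinuousWithinAt (fun s => 2 * c₀ * φ s / ψ s) (Set.Ici 0) 0 := by
    rw [ContinuousWithinAt, hφ0, mul_zero, zero_div]
    apply squeeze_zero' (g := fun s : ℝ => 2 * c₀ * (C * s))
    · filter_upwards [self_mem_nhdsWithin] with s hs
      exact hDnonneg s hs
    · filter_upwards [self_mem_nhdsWithin,
        nhdsWithin_le_nhds (Iio_mem_nhds hδpos)] with s hs0 hsδ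
      rcases (Set.mem_Ici.mp hs0).eq_or_lt with h | h
      · rw [← h, hφ0, mul_zero, zero_div, mul_zero, mul_zero]
      · have hk := hkey s h (le_of_lt hsδ)
        rw [mul_div_assoc]
        exact mul_le_mul_of_nonneg_left hk (by positivity)
    · have : Filter.Tendsto (fun s : ℝ => 2 * c₀ * (C * s)) (nhds 0)
          (nhds (2 * c₀ * (C * 0))) :=
        (Continuous.tendsto (by continuity) 0)
      simpa using this.mono_left nhdsWithin_le_nhds
  have hDcont : ContinuousOn (fun s => 2 * c₀ * φ s / ψ s) (Set.Ici 0) := by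
    intro x hx
    rcases (Set.mem_Ici.mp hx).eq_or_lt with h | h
    · rw [← h]; exact hDcont0
    · have hφc : ContinuousAt φ x := (hφderiv x h).continuousAt
      have hψc : ContinuousAt ψ x := hψcont.continuousAt (Ici_mem_nhds h)
      exact (((continuousAt_const.mul hφc).div hψc (hψpos x h).ne')).continuousWithinAt
  exact ⟨⟨⟨hcontφ, hmonoφ, hφ0⟩, hunbdd⟩, hφderiv, hderiv0, hDcont⟩
end

section
/- Let c₀ > 0 and let ψ : [0,∞) → [0,∞) be a continuously differentiable class K∞ function with ψ′(0) = 0 and ψ(s) ≤ c₀·s for all s ≥ 0, and let α be a class K∞ function with ψ(s) ≤ α(s) for all s ≥ 0. Define φ(0) = 0 and φ(s) = exp(∫₁ˢ 2c₀/ψ(r) dr) for s > 0, and let φ′ denote its derivative. Then for every s ≥ 0, every g ≥ 0, and every real w with w ≤ −α(s) + g: φ′(s)·w ≤ −2c₀·φ(s) + φ′(s)·g. -/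
theorem stmt_8 (c₀ : ℝ) (hc₀ : 0 < c₀) (ψ ψ' : ℝ → ℝ) (hψ : IsClassKInf ψ)
    (hψ_deriv : ∀ s ∈ Set.Ici (0:ℝ), HasDerivWithinAt ψ (ψ' s) (Set.Ici 0) s)
    (hψ'_cont : ContinuousOn ψ' (Set.Ici 0)) (hψ'0 : ψ' 0 = 0)
    (hψ_le : ∀ s, 0 ≤ s → ψ s ≤ c₀ * s)
    (α : ℝ → ℝ) (hα : IsClassKInf α) (hψ_le_α : ∀ s, 0 ≤ s → ψ s ≤ α s)
    (φ φ' : ℝ → ℝ) (hφ0 : φ 0 = 0)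
    (hφ : ∀ s, 0 < s → φ s = Real.exp (∫ r in (1:ℝ)..s, 2 * c₀ / ψ r))
    -- `φ'` is the derivative of `φ` on `[0,∞)`
    (hφ' : ∀ s, 0 < s → φ' s = 2 * c₀ * φ s / ψ s) (hφ'0 : φ' 0 = 0) :
    ∀ s, 0 ≤ s → ∀ g, 0 ≤ g → ∀ w : ℝ, w ≤ -α s + g →
      φ' s * w ≤ -(2 * c₀) * φ s + φ' s * g := by
  intro s hs g hg w hw
  rcases eq_or_lt_of_le hs with h0 | hpos
  · simp [← h0, hφ'0, hφ0]
  · have hψ0 : ψ 0 = 0 := hψ.1.2.2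
    have hψpos : 0 < ψ s := by
      have := hψ.1.2.1 (Set.self_mem_Ici) (Set.mem_Ici.mpr hs) hpos
      rwa [hψ0] at this
    have hφpos : 0 < φ s := by rw [hφ s hpos]; exact Real.exp_pos _
    have hφ'eq := hφ' s hpos
    have hφ'nn : 0 ≤ φ' s := by
      rw [hφ'eq]
      positivity
    have h1 : φ' s * w ≤ φ' s * (-α s + g) := mul_le_mul_of_nonneg_left hw hφ'nn
    have h2 : 2 * c₀ * φ s ≤ φ' s * α s := by
      rw [hφ'eq, div_mul_eq_mul_div, le_div_iff₀ hψpos]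
      have : ψ s ≤ α s := hψ_le_α s hs
      nlinarith [mul_le_mul_of_nonneg_left this (by positivity : (0:ℝ) ≤ 2 * c₀ * φ s)]
    nlinarith
end

section
/- Let c₀ > 0, ζ > 0, ε > 0, and N₀ ≥ 1. Let ψ : [0,∞) → [0,∞) be a continuously differentiable class K∞ function with ψ′(0) = 0 and ψ(s) ≤ c₀·s for all s ≥ 0, define φ(0) = 0 and φ(s) = exp(∫₁ˢ 2c₀/ψ(r) dr) for s > 0, and let χ be a class K∞ function. Suppose ζ* is a real number such that ∫_s^{(1+ε)χ(s)} 1/ψ(r) dr ≤ ζ* for every s > 0. Define ρ̃(u) := exp(2c₀ζ(N₀ − 1))·φ((1+ε)·u/ε) for u ≥ 0. Then for every τ ∈ [1, N₀], every s ≥ 0, and every u ≥ 0: exp(2c₀ζ(τ−1))·φ(χ(s) + u) ≤ exp(2c₀(ζ* − ζ))·exp(2c₀ζτ)·φ(s) + ρ̃(u). -/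
theorem stmt_9 (c₀ ζ ε N₀ ζstar : ℝ) (hc₀ : 0 < c₀) (hζ : 0 < ζ) (hε : 0 < ε) (hN₀ : 1 ≤ N₀)
    (ψ ψ' : ℝ → ℝ) (hψ : IsClassKInf ψ)
    (hψ_deriv : ∀ s ∈ Set.Ici (0:ℝ), HasDerivWithinAt ψ (ψ' s) (Set.Ici 0) s)
    (hψ'_cont : ContinuousOn ψ' (Set.Ici 0)) (hψ'0 : ψ' 0 = 0)
    (hψ_le : ∀ s, 0 ≤ s → ψ s ≤ c₀ * s)
    (φ : ℝ → ℝ) (hφ0 : φ 0 = 0)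
    (hφ : ∀ s, 0 < s → φ s = Real.exp (∫ r in (1:ℝ)..s, 2 * c₀ / ψ r))
    (χ : ℝ → ℝ) (hχ : IsClassKInf χ)
    (hζstar : ∀ s, 0 < s → (∫ r in s..((1 + ε) * χ s), 1 / ψ r) ≤ ζstar)
    -- `ρ̃(u) := exp(2c₀ζ(N₀ − 1))·φ((1+ε)·u/ε)`
    (ρtilde : ℝ → ℝ)
    (hρtilde : ∀ u, 0 ≤ u → ρtilde u = Real.exp (2 * c₀ * ζ * (N₀ - 1)) * φ ((1 + ε) * u / ε)) :
    ∀ τ, 1 ≤ τ → τ ≤ N₀ → ∀ s, 0 ≤ s → ∀ u, 0 ≤ u →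
      Real.exp (2 * c₀ * ζ * (τ - 1)) * φ (χ s + u) ≤
        Real.exp (2 * c₀ * (ζstar - ζ)) * (Real.exp (2 * c₀ * ζ * τ) * φ s) + ρtilde u := by
  obtain ⟨⟨hψc, hψm, hψ0⟩, -⟩ := hψ
  obtain ⟨⟨hχc, hχm, hχ0⟩, -⟩ := hχ
  have hψpos : ∀ r : ℝ, 0 < r → 0 < ψ r := by
    intro r hr
    have := hψm Set.self_mem_Ici hr.le hr
    rwa [hψ0] at this
  have hint : ∀ a b : ℝ, 0 < a → 0 < b →
      IntervalIntegrable (fun r => 2 * c₀ / ψ r) MeasureTheory.volume a b := by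
    intro a b ha hb
    apply ContinuousOn.intervalIntegrable
    have hpos : ∀ x ∈ Set.uIcc a b, 0 < x := fun x hx => lt_of_lt_of_le (lt_min ha hb) hx.1
    have hsub : Set.uIcc a b ⊆ Set.Ici 0 := fun x hx => (hpos x hx).le
    exact ContinuousOn.div continuousOn_const (hψc.mono hsub)
      (fun x hx => (hψpos x (hpos x hx)).ne')
  have hφnn : ∀ s : ℝ, 0 ≤ s → 0 ≤ φ s := by
    intro s hs
    rcases hs.eq_or_lt with h | h
    · rw [← h, hφ0]
    · rw [hφ s h]; exact (Real.exp_pos _).le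
  have hφmono : ∀ a b : ℝ, 0 ≤ a → a ≤ b → φ a ≤ φ b := by
    intro a b ha hab
    rcases ha.eq_or_lt with h | h
    · rw [← h, hφ0]; exact hφnn b (h ▸ hab)
    · have hb : 0 < b := lt_of_lt_of_le h hab
      rw [hφ a h, hφ b hb]
      apply Real.exp_le_exp.2
      have hadd := intervalIntegral.integral_add_adjacent_intervals
        (hint 1 a one_pos h) (hint a b h hb)
      rw [← hadd]
      have hnn : 0 ≤ ∫ x in a..b, 2 * c₀ / ψ x :=
        intervalIntegral.integral_nonneg hab
          (fun x hx => div_nonneg (by linarith) (hψpos x (lt_of_lt_of_le h hx.1)).le)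
      linarith
  have hkey : ∀ s : ℝ, 0 < s → φ ((1 + ε) * χ s) ≤ Real.exp (2 * c₀ * ζstar) * φ s := by
    intro s hs
    have hχs : 0 < χ s := by
      have := hχm Set.self_mem_Ici hs.le hs; rwa [hχ0] at this
    have hT : 0 < (1 + ε) * χ s := mul_pos (by linarith) hχs
    rw [hφ _ hT, hφ s hs, ← Real.exp_add]
    apply Real.exp_le_exp.2
    have hadd := intervalIntegral.integral_add_adjacent_intervals
      (hint 1 s one_pos hs) (hint s _ hs hT)
    rw [← hadd]
    have h1 : (∫ r in s..((1 + ε) * χ s), 2 * c₀ / ψ r)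
        = 2 * c₀ * ∫ r in s..((1 + ε) * χ s), 1 / ψ r := by
      simp_rw [div_eq_mul_inv, one_mul]
      exact intervalIntegral.integral_const_mul _ _
    have h2 := hζstar s hs
    have h3 : 2 * c₀ * (∫ r in s..((1 + ε) * χ s), 1 / ψ r) ≤ 2 * c₀ * ζstar :=
      mul_le_mul_of_nonneg_left h2 (by linarith)
    linarith [h1 ▸ h3]
  intro τ hτ1 hτN s hs u hu
  have hχs0 : 0 ≤ χ s := by
    rcases hs.eq_or_lt with h | h
    · rw [← h, hχ0]
    · have := hχm Set.self_mem_Ici h.le h; rw [hχ0] at this; exact this.le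
  rw [hρtilde u hu]
  have hρnn : 0 ≤ Real.exp (2 * c₀ * ζ * (N₀ - 1)) * φ ((1 + ε) * u / ε) :=
    mul_nonneg (Real.exp_pos _).le (hφnn _ (by positivity))
  by_cases hcase : u ≤ ε * χ s
  · rcases hs.eq_or_lt with h | h
    · subst h
      have hu0 : u = 0 := le_antisymm (by rw [hχ0] at hcase; linarith) hu
      subst hu0
      simp [hφ0, hχ0]
    · have hb1 : φ (χ s + u) ≤ φ ((1 + ε) * χ s) :=
        hφmono _ _ (by linarith) (by nlinarith)
      have hb2 := hkey s h
      have e1 : Real.exp (2 * c₀ * ζ * (τ - 1)) * Real.exp (2 * c₀ * ζstar)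
          = Real.exp (2 * c₀ * (ζstar - ζ)) * Real.exp (2 * c₀ * ζ * τ) := by
        rw [← Real.exp_add, ← Real.exp_add]; ring_nf
      calc Real.exp (2 * c₀ * ζ * (τ - 1)) * φ (χ s + u)
          ≤ Real.exp (2 * c₀ * ζ * (τ - 1)) * φ ((1 + ε) * χ s) :=
            mul_le_mul_of_nonneg_left hb1 (Real.exp_pos _).le
        _ ≤ Real.exp (2 * c₀ * ζ * (τ - 1)) * (Real.exp (2 * c₀ * ζstar) * φ s) :=
            mul_le_mul_of_nonneg_left hb2 (Real.exp_pos _).le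
        _ = Real.exp (2 * c₀ * (ζstar - ζ)) * (Real.exp (2 * c₀ * ζ * τ) * φ s) := by
            rw [← mul_assoc, e1, mul_assoc]
        _ ≤ _ := le_add_of_nonneg_right hρnn
  · push_neg at hcase
    have hu0 : 0 < u := lt_of_le_of_lt (by positivity) hcase
    have harg : χ s + u ≤ (1 + ε) * u / ε := by
      rw [div_eq_mul_inv]
      have : χ s ≤ u / ε := (le_div_iff₀ hε).2 (by nlinarith)
      rw [div_eq_mul_inv] at this
      have he : ε * ε⁻¹ = 1 := mul_inv_cancel₀ hε.ne'
      nlinarith [mul_pos hu0 (inv_pos.2 hε)]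
    have hb1 : φ (χ s + u) ≤ φ ((1 + ε) * u / ε) := hφmono _ _ (by linarith) harg
    have hb2 : Real.exp (2 * c₀ * ζ * (τ - 1)) ≤ Real.exp (2 * c₀ * ζ * (N₀ - 1)) :=
      Real.exp_le_exp.2 (by nlinarith [mul_pos hc₀ hζ])
    have hfirst : 0 ≤ Real.exp (2 * c₀ * (ζstar - ζ)) * (Real.exp (2 * c₀ * ζ * τ) * φ s) :=
      mul_nonneg (Real.exp_pos _).le (mul_nonneg (Real.exp_pos _).le (hφnn s hs))
    calc Real.exp (2 * c₀ * ζ * (τ - 1)) * φ (χ s + u)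
        ≤ Real.exp (2 * c₀ * ζ * (N₀ - 1)) * φ ((1 + ε) * u / ε) :=
          mul_le_mul hb2 hb1 (hφnn _ (by linarith)) (Real.exp_pos _).le
      _ ≤ _ := le_add_of_nonneg_left hfirst
end

section
/- Let n, m be positive integers and let F be a real n×n matrix, G a real n×m matrix, and P, Q real symmetric positive definite n×n matrices such that Fᵀ P + P F + Q is negative semidefinite. Let λ_min(Q) denote the smallest eigenvalue of Q, λ_max(P) the largest eigenvalue of P, and ‖PG‖ the operator norm of PG. Then for all e ∈ ℝⁿ and d ∈ ℝᵐ: 2·⟨P e, F e + G d⟩ ≤ −(λ_min(Q)/(2·λ_max(P)))·(eᵀ P e) + (2·‖PG‖²/λ_min(Q))·‖d‖². -/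
open scoped RealInnerProductSpace Matrix

/-!
Expanding `2⟪Pe, Fe + Gd⟫ = eᵀ(FᵀP + PF)e + 2⟪e, PGd⟫`, the Lyapunov inequality bounds the
drift term by `-eᵀQe ≤ -λ_min(Q)‖e‖²`, and Young's inequality with weight `λ_min(Q)/2` bounds the
cross term by `λ_min(Q)/2 ‖e‖² + 2‖PG‖²/λ_min(Q) ‖d‖²`. What is left, `-λ_min(Q)/2 ‖e‖²`, is at
most `-λ_min(Q)/(2λ_max(P)) eᵀPe` because `eᵀPe ≤ λ_max(P)‖e‖²`.
-/

lemma OrthonormalBasis.sum_inner_sq_eq_norm_sq {ι E : Type*} [Fintype ι] [NormedAddCommGroup E]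
    [InnerProductSpace ℝ E] (b : OrthonormalBasis ι ℝ E) (x : E) :
    ∑ i, ⟪b i, x⟫ ^ 2 = ‖x‖ ^ 2 := by
  simpa only [Real.norm_eq_abs, sq_abs] using b.sum_sq_norm_inner_right x

namespace Matrix

variable {ι κ : Type*} [Fintype ι] [DecidableEq ι] [Fintype κ] [DecidableEq κ]

lemma inner_toEuclideanLin_transpose (A : Matrix ι κ ℝ) (x : EuclideanSpace ℝ κ)
    (y : EuclideanSpace ℝ ι) : ⟪x, toEuclideanLin Aᵀ y⟫ = ⟪toEuclideanLin A x, y⟫ := by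
  rw [← conjTranspose_eq_transpose_of_trivial, toEuclideanLin_conjTranspose_eq_adjoint,
    LinearMap.adjoint_inner_right]

namespace IsHermitian

variable {A : Matrix ι ι ℝ} (hA : A.IsHermitian)
include hA

lemma inner_toEuclideanLin_comm (x y : EuclideanSpace ℝ ι) :
    ⟪toEuclideanLin A x, y⟫ = ⟪x, toEuclideanLin A y⟫ :=
  isSymmetric_toEuclideanLin_iff.mpr hA x y

lemma inner_toEuclideanLin_mul (G : Matrix ι κ ℝ) (x : EuclideanSpace ℝ ι)
    (y : EuclideanSpace ℝ κ) :
    ⟪toEuclideanLin A x, toEuclideanLin G y⟫ = ⟪x, toEuclideanLin (A * G) y⟫ := by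
  rw [hA.inner_toEuclideanLin_comm, toLpLin_mul_same, LinearMap.comp_apply]

lemma inner_toEuclideanLin_self_eq_sum (x : EuclideanSpace ℝ ι) :
    ⟪x, toEuclideanLin A x⟫ = ∑ i, hA.eigenvalues i * ⟪hA.eigenvectorBasis i, x⟫ ^ 2 := by
  set b := hA.eigenvectorBasis
  have hb : ∀ i, toEuclideanLin A (b i) = hA.eigenvalues i • b i := fun i =>
    WithLp.ofLp_injective 2 (by simpa using hA.mulVec_eigenvectorBasis i)
  rw [← b.sum_inner_mul_inner x (toEuclideanLin A x)]
  refine Finset.sum_congr rfl fun i _ => ?_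
  rw [← hA.inner_toEuclideanLin_comm, hb i, real_inner_smul_left, real_inner_comm x]
  ring

lemma iInf_eigenvalues_mul_norm_sq_le (x : EuclideanSpace ℝ ι) :
    (⨅ i, hA.eigenvalues i) * ‖x‖ ^ 2 ≤ ⟪x, toEuclideanLin A x⟫ := by
  rw [hA.inner_toEuclideanLin_self_eq_sum, ← hA.eigenvectorBasis.sum_inner_sq_eq_norm_sq,
    Finset.mul_sum]
  gcongr with i
  exact ciInf_le (Set.finite_range _).bddBelow i

lemma inner_toEuclideanLin_self_le_iSup_eigenvalues_mul_norm_sq (x : EuclideanSpace ℝ ι) :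
    ⟪x, toEuclideanLin A x⟫ ≤ (⨆ i, hA.eigenvalues i) * ‖x‖ ^ 2 := by
  rw [hA.inner_toEuclideanLin_self_eq_sum, ← hA.eigenvectorBasis.sum_inner_sq_eq_norm_sq,
    Finset.mul_sum]
  gcongr with i
  exact le_ciSup (Set.finite_range _).bddAbove i

end IsHermitian

lemma PosDef.iInf_eigenvalues_pos [Nonempty ι] {A : Matrix ι ι ℝ} (hA : A.PosDef) :
    0 < ⨅ i, hA.1.eigenvalues i := by
  obtain ⟨i, hi⟩ := exists_eq_ciInf_of_finite (f := hA.1.eigenvalues)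
  exact hi ▸ hA.eigenvalues_pos i

lemma PosDef.iSup_eigenvalues_pos [Nonempty ι] {A : Matrix ι ι ℝ} (hA : A.PosDef) :
    0 < ⨆ i, hA.1.eigenvalues i := by
  obtain ⟨i, hi⟩ := exists_eq_ciSup_of_finite (f := hA.1.eigenvalues)
  exact hi ▸ hA.eigenvalues_pos i

lemma two_mul_inner_toEuclideanLin_add_inner_le_zero {F P Q : Matrix ι ι ℝ} (hP : P.IsHermitian)
    (hLyap : (-(Fᵀ * P + P * F + Q)).PosSemidef) (x : EuclideanSpace ℝ ι) :
    2 * ⟪toEuclideanLin P x, toEuclideanLin F x⟫ + ⟪x, toEuclideanLin Q x⟫ ≤ 0 := by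
  have h := (isPositive_toEuclideanLin_iff.mpr hLyap).inner_nonneg_right x
  simp only [map_neg, map_add, toLpLin_mul_same, LinearMap.neg_apply, LinearMap.add_apply,
    LinearMap.comp_apply, inner_neg_right, inner_add_right] at h
  rw [inner_toEuclideanLin_transpose, ← hP.inner_toEuclideanLin_comm x] at h
  linarith [real_inner_comm (toEuclideanLin P x) (toEuclideanLin F x)]

end Matrix

theorem stmt_11_general (n m : ℕ) (hn : 0 < n)
    (F : Matrix (Fin n) (Fin n) ℝ) (G : Matrix (Fin n) (Fin m) ℝ)
    (P Q : Matrix (Fin n) (Fin n) ℝ) (hP : P.PosDef) (hQ : Q.PosDef)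
    (hLyap : (-(Fᵀ * P + P * F + Q)).PosSemidef) :
    ∀ (e : EuclideanSpace ℝ (Fin n)) (d : EuclideanSpace ℝ (Fin m)),
      2 * ⟪Matrix.toEuclideanLin P e, Matrix.toEuclideanLin F e + Matrix.toEuclideanLin G d⟫ ≤
        -((⨅ i, hQ.1.eigenvalues i) / (2 * ⨆ i, hP.1.eigenvalues i)) *
            ⟪e, Matrix.toEuclideanLin P e⟫ +
          2 * ‖LinearMap.toContinuousLinearMap (Matrix.toEuclideanLin (P * G))‖ ^ 2 /
            (⨅ i, hQ.1.eigenvalues i) * ‖d‖ ^ 2 := by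
  intro e d
  have : Nonempty (Fin n) := Fin.pos_iff_nonempty.mp hn
  set T := LinearMap.toContinuousLinearMap (Matrix.toEuclideanLin (P * G))
  set lq := ⨅ i, hQ.1.eigenvalues i
  set lp := ⨆ i, hP.1.eigenvalues i
  have hlq : 0 < lq := hQ.iInf_eigenvalues_pos
  have hlp : 0 < lp := hP.iSup_eigenvalues_pos
  have hdrift := Matrix.two_mul_inner_toEuclideanLin_add_inner_le_zero hP.1 hLyap e
  have hQe : lq * ‖e‖ ^ 2 ≤ ⟪e, Matrix.toEuclideanLin Q e⟫ :=
    hQ.1.iInf_eigenvalues_mul_norm_sq_le e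
  have hcross : 2 * ⟪e, Matrix.toEuclideanLin (P * G) d⟫ ≤
      lq / 2 * ‖e‖ ^ 2 + 2 * ‖T‖ ^ 2 / lq * ‖d‖ ^ 2 :=
    calc 2 * ⟪e, T d⟫ ≤ 2 * ‖e‖ * (‖T‖ * ‖d‖) := by
          grw [mul_assoc, real_inner_le_norm, T.le_opNorm]
      _ ≤ lq / 2 * ‖e‖ ^ 2 + (lq / 2)⁻¹ * (‖T‖ * ‖d‖) ^ 2 :=
          two_mul_le_add_mul_sq (by positivity)
      _ = lq / 2 * ‖e‖ ^ 2 + 2 * ‖T‖ ^ 2 / lq * ‖d‖ ^ 2 := by field_simp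
  have hPe : lq / (2 * lp) * ⟪e, Matrix.toEuclideanLin P e⟫ ≤ lq / 2 * ‖e‖ ^ 2 :=
    calc lq / (2 * lp) * ⟪e, Matrix.toEuclideanLin P e⟫ ≤ lq / (2 * lp) * (lp * ‖e‖ ^ 2) := by
          gcongr
          exact hP.1.inner_toEuclideanLin_self_le_iSup_eigenvalues_mul_norm_sq e
      _ = lq / 2 * ‖e‖ ^ 2 := by field_simp
  rw [inner_add_right, hP.1.inner_toEuclideanLin_mul G e d]
  linarith

theorem stmt_11 (n m : ℕ) (hn : 0 < n) (hm : 0 < m)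
    (F : Matrix (Fin n) (Fin n) ℝ) (G : Matrix (Fin n) (Fin m) ℝ)
    (P Q : Matrix (Fin n) (Fin n) ℝ) (hP : P.PosDef) (hQ : Q.PosDef)
    (hLyap : (-(Fᵀ * P + P * F + Q)).PosSemidef) :
    ∀ (e : EuclideanSpace ℝ (Fin n)) (d : EuclideanSpace ℝ (Fin m)),
      2 * ⟪Matrix.toEuclideanLin P e, Matrix.toEuclideanLin F e + Matrix.toEuclideanLin G d⟫ ≤
        -((⨅ i, hQ.1.eigenvalues i) / (2 * ⨆ i, hP.1.eigenvalues i)) *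
            ⟪e, Matrix.toEuclideanLin P e⟫ +
          2 * ‖LinearMap.toContinuousLinearMap (Matrix.toEuclideanLin (P * G))‖ ^ 2 /
            (⨅ i, hQ.1.eigenvalues i) * ‖d‖ ^ 2 :=
  stmt_11_general n m hn F G P Q hP hQ hLyap
end

section
/- Let n_c, n_o, m be positive integers, A : ℝ^{n_c} → ℝ^{n_c}, B : ℝ^{n_o} → ℝ^{n_c}, F : ℝ^{n_o} → ℝ^{n_o}, G : ℝᵐ → ℝ^{n_o} linear maps, and let V_o : ℝ^{n_o} → ℝ and V_c : ℝ^{n_c} → ℝ be nonnegative continuously differentiable functions. Suppose there are constants a_o, a_c, γ̄_c > 0 and γ̄_o ≥ 0 such that for all x, e, d: ⟨∇V_o(e), F e + G d⟩ ≤ −a_o·V_o(e) + γ̄_o·‖d‖² and ⟨∇V_c(x), A x + B e⟩ ≤ −a_c·V_c(x) + γ̄_c·V_o(e). Set ν̄ := γ̄_c/a_o and V(x,e) := 4·ν̄·V_o(e) + V_c(x). Then for all x, e, d: ⟨∇V(x,e), (A x + B e, F e + G d)⟩ ≤ −min{a_c, (3/4)·a_o}·V(x,e) + 4·ν̄·γ̄_o·‖d‖².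 -/
open scoped RealInnerProductSpace

section Gradient

variable {E : Type*} [NormedAddCommGroup E] [InnerProductSpace ℝ E] [CompleteSpace E]

theorem gradient_const_add (f : E → ℝ) (c : ℝ) (x : E) :
    gradient (fun y => c + f y) x = gradient f x := by
  simp only [gradient, fderiv_const_add]

theorem gradient_const_mul_add_const (f : E → ℝ) (c b : ℝ) (x : E) :
    gradient (fun y => c * f y + b) x = c • gradient f x := by
  have hmul : (fun y => c * f y) = c • f := rfl
  simp only [gradient, fderiv_add_const, hmul, fderiv_const_smul_field, Pi.smul_apply, map_smul]

end Gradient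

/-- With `4 γc ≤ k ao`, the weighted decay `k ao Vo` of the driving subsystem absorbs the
coupling term `γc Vo` and keeps three quarters of its rate. -/
theorem cascade_dissipation_le {Dc Do Vc Vo ac ao γc w k : ℝ} (hVc : 0 ≤ Vc) (hVo : 0 ≤ Vo)
    (hk : 0 ≤ k) (hgain : 4 * γc ≤ k * ao)
    (hc : Dc ≤ -ac * Vc + γc * Vo) (ho : Do ≤ -ao * Vo + w) :
    Dc + k * Do ≤ -(min ac (3 / 4 * ao)) * (k * Vo + Vc) + k * w := by
  have hDo : k * Do ≤ k * (-ao * Vo + w) := mul_le_mul_of_nonneg_left ho hk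
  have hcoupling : 4 * γc * Vo ≤ k * ao * Vo := mul_le_mul_of_nonneg_right hgain hVo
  have hVc_rate : min ac (3 / 4 * ao) * Vc ≤ ac * Vc :=
    mul_le_mul_of_nonneg_right (min_le_left _ _) hVc
  have hVo_rate : min ac (3 / 4 * ao) * (k * Vo) ≤ 3 / 4 * ao * (k * Vo) :=
    mul_le_mul_of_nonneg_right (min_le_right _ _) (mul_nonneg hk hVo)
  linarith

theorem stmt_13_general (nc no m : ℕ)
    (A : EuclideanSpace ℝ (Fin nc) →ₗ[ℝ] EuclideanSpace ℝ (Fin nc))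
    (B : EuclideanSpace ℝ (Fin no) →ₗ[ℝ] EuclideanSpace ℝ (Fin nc))
    (F : EuclideanSpace ℝ (Fin no) →ₗ[ℝ] EuclideanSpace ℝ (Fin no))
    (G : EuclideanSpace ℝ (Fin m) →ₗ[ℝ] EuclideanSpace ℝ (Fin no))
    (V_o : EuclideanSpace ℝ (Fin no) → ℝ) (V_c : EuclideanSpace ℝ (Fin nc) → ℝ)
    (hVo_nonneg : ∀ e, 0 ≤ V_o e) (hVc_nonneg : ∀ x, 0 ≤ V_c x)
    (a_o a_c γbar_c γbar_o : ℝ) (ha_o : 0 < a_o) (hγbar_c : 0 < γbar_c)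
    (hdiss_o : ∀ (e : EuclideanSpace ℝ (Fin no)) (d : EuclideanSpace ℝ (Fin m)),
      ⟪gradient V_o e, F e + G d⟫ ≤ -a_o * V_o e + γbar_o * ‖d‖ ^ 2)
    (hdiss_c : ∀ (x : EuclideanSpace ℝ (Fin nc)) (e : EuclideanSpace ℝ (Fin no)),
      ⟪gradient V_c x, A x + B e⟫ ≤ -a_c * V_c x + γbar_c * V_o e)
    (νbar : ℝ) (hνbar : νbar = γbar_c / a_o)
    -- `V (x, e) = 4·ν̄·V_o e + V_c x`; its derivative along the cascade dynamics
    -- `(A x + B e, F e + G d)` is the sum of the two partial-gradient pairings below.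
    (V : EuclideanSpace ℝ (Fin nc) → EuclideanSpace ℝ (Fin no) → ℝ)
    (hV : ∀ x e, V x e = 4 * νbar * V_o e + V_c x) :
    ∀ (x : EuclideanSpace ℝ (Fin nc)) (e : EuclideanSpace ℝ (Fin no))
      (d : EuclideanSpace ℝ (Fin m)),
      ⟪gradient (fun x' => V x' e) x, A x + B e⟫ + ⟪gradient (fun e' => V x e') e, F e + G d⟫ ≤
        -(min a_c (3 / 4 * a_o)) * V x e + 4 * νbar * γbar_o * ‖d‖ ^ 2 := by
  intro x e d
  have hgain : 4 * γbar_c = 4 * νbar * a_o := by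
    rw [hνbar]
    field_simp
  have hweight : 0 ≤ 4 * νbar := by
    rw [hνbar]
    positivity
  simp only [hV]
  rw [gradient_const_add, gradient_const_mul_add_const, real_inner_smul_left]
  linarith [cascade_dissipation_le (hVc_nonneg x) (hVo_nonneg e) hweight hgain.le
    (hdiss_c x e) (hdiss_o e d)]

theorem stmt_13 (nc no m : ℕ) (hnc : 0 < nc) (hno : 0 < no) (hm : 0 < m)
    (A : EuclideanSpace ℝ (Fin nc) →ₗ[ℝ] EuclideanSpace ℝ (Fin nc))
    (B : EuclideanSpace ℝ (Fin no) →ₗ[ℝ] EuclideanSpace ℝ (Fin nc))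
    (F : EuclideanSpace ℝ (Fin no) →ₗ[ℝ] EuclideanSpace ℝ (Fin no))
    (G : EuclideanSpace ℝ (Fin m) →ₗ[ℝ] EuclideanSpace ℝ (Fin no))
    (V_o : EuclideanSpace ℝ (Fin no) → ℝ) (V_c : EuclideanSpace ℝ (Fin nc) → ℝ)
    (hVo_nonneg : ∀ e, 0 ≤ V_o e) (hVc_nonneg : ∀ x, 0 ≤ V_c x)
    (hVo_smooth : ContDiff ℝ 1 V_o) (hVc_smooth : ContDiff ℝ 1 V_c)
    (a_o a_c γbar_c γbar_o : ℝ) (ha_o : 0 < a_o) (ha_c : 0 < a_c) (hγbar_c : 0 < γbar_c)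
    (hγbar_o : 0 ≤ γbar_o)
    (hdiss_o : ∀ (e : EuclideanSpace ℝ (Fin no)) (d : EuclideanSpace ℝ (Fin m)),
      ⟪gradient V_o e, F e + G d⟫ ≤ -a_o * V_o e + γbar_o * ‖d‖ ^ 2)
    (hdiss_c : ∀ (x : EuclideanSpace ℝ (Fin nc)) (e : EuclideanSpace ℝ (Fin no)),
      ⟪gradient V_c x, A x + B e⟫ ≤ -a_c * V_c x + γbar_c * V_o e)
    (νbar : ℝ) (hνbar : νbar = γbar_c / a_o)
    -- `V (x, e) = 4·ν̄·V_o e + V_c x`; its derivative along the cascade dynamics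
    -- `(A x + B e, F e + G d)` is the sum of the two partial-gradient pairings below.
    (V : EuclideanSpace ℝ (Fin nc) → EuclideanSpace ℝ (Fin no) → ℝ)
    (hV : ∀ x e, V x e = 4 * νbar * V_o e + V_c x) :
    ∀ (x : EuclideanSpace ℝ (Fin nc)) (e : EuclideanSpace ℝ (Fin no))
      (d : EuclideanSpace ℝ (Fin m)),
      ⟪gradient (fun x' => V x' e) x, A x + B e⟫ + ⟪gradient (fun e' => V x e') e, F e + G d⟫ ≤
        -(min a_c (3 / 4 * a_o)) * V x e + 4 * νbar * γbar_o * ‖d‖ ^ 2 :=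
  stmt_13_general nc no m A B F G V_o V_c hVo_nonneg hVc_nonneg a_o a_c γbar_c γbar_o ha_o hγbar_c
    hdiss_o hdiss_c νbar hνbar V hV
end
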